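/- arXiv:2102.00317 — 6 statements merged into one kernel-verified Lean document; each statement's English description precedes it below -/
import Mathlib

section
/- Let f : 2^X → 2^Y be a poset embedding between the power sets of finite sets X and Y, and suppose the top element f(X) has cardinality N. Then for every nonempty I ⊆ X, the intersection ⋂_{a ∈ I} f(X \ {a}) has cardinality at most N − |I|. -/
/-!
Write `C J` for the intersection of the top children `f (X \ {b})`, `b ∈ J`. Since `f` is monotone,
`f (X \ J) ⊆ C J`; since `f` reflects inclusion, `f (X \ J) ⊈ f (X \ {a})` for `a ∈ X \ J`. So
adding `a` to `J` removes at least one point of `f (X \ J)` from `C J`, and each of the `|I|`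
indices costs at least one element of the top element `f X`.
-/

open Finset

section

variable {α β : Type*} [DecidableEq α] [DecidableEq β]

/-- Taken inside `f X`, so that `J = ∅` gives the top element itself. -/
def commonTopChildren (X : Finset α) (f : Finset α → Finset β) (J : Finset α) : Finset β :=
  {y ∈ f X | ∀ b ∈ J, y ∈ f (X.erase b)}

variable {X : Finset α} {f : Finset α → Finset β}
  (hf : ∀ S T, S ⊆ X → T ⊆ X → (S ⊆ T ↔ f S ⊆ f T))
include hf

theorem image_sdiff_subset_commonTopChildren {J : Finset α} :
    f (X \ J) ⊆ commonTopChildren X f J := by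
  intro y hy
  refine mem_filter.2 ⟨(hf _ _ sdiff_subset Subset.rfl).1 sdiff_subset hy, fun b hb => ?_⟩
  have hsub : X \ J ⊆ X.erase b := fun x hx =>
    mem_erase.2 ⟨fun h => (mem_sdiff.1 hx).2 (h ▸ hb), (mem_sdiff.1 hx).1⟩
  exact (hf _ _ sdiff_subset (erase_subset _ _)).1 hsub hy

theorem commonTopChildren_insert_ssubset {J : Finset α} {a : α} (haX : a ∈ X) (haJ : a ∉ J) :
    commonTopChildren X f (insert a J) ⊂ commonTopChildren X f J := by
  have hnot : ¬ f (X \ J) ⊆ f (X.erase a) := fun h =>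
    notMem_erase a X ((hf _ _ sdiff_subset (erase_subset _ _)).2 h (mem_sdiff.2 ⟨haX, haJ⟩))
  obtain ⟨y, hyJ, hya⟩ := not_subset.1 hnot
  refine Finset.ssubset_iff_subset_ne.2 ⟨?_, fun h => ?_⟩
  · exact monotone_filter_right _ fun _ _ hy b hb => hy b (mem_insert_of_mem hb)
  · have hy := image_sdiff_subset_commonTopChildren hf hyJ
    rw [← h] at hy
    exact hya ((mem_filter.1 hy).2 a (mem_insert_self a J))

theorem card_commonTopChildren_add_card_le {J : Finset α} (hJX : J ⊆ X) :
    #(commonTopChildren X f J) + #J ≤ #(f X) := by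
  induction J using Finset.induction_on with
  | empty => simp [commonTopChildren]
  | insert a J haJ ih =>
    have hlt := card_lt_card (commonTopChildren_insert_ssubset hf (hJX (mem_insert_self a J)) haJ)
    have ih := ih ((subset_insert a J).trans hJX)
    rw [card_insert_of_notMem haJ]
    omega

theorem inf'_image_erase_eq_commonTopChildren {I : Finset α} (hI : I.Nonempty) :
    I.inf' hI (fun a => f (X.erase a)) = commonTopChildren X f I := by
  ext y
  simp only [mem_inf', commonTopChildren, mem_filter]
  refine ⟨fun hy => ⟨?_, hy⟩, fun hy => hy.2⟩
  obtain ⟨a, ha⟩ := hI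
  exact (hf _ _ (erase_subset _ _) Subset.rfl).1 (erase_subset _ _) (hy a ha)

end

theorem statement3_general {α β : Type*} [DecidableEq α] [DecidableEq β]
    (X : Finset α) (f : Finset α → Finset β)
    (hord : ∀ S T, S ⊆ X → T ⊆ X → (S ⊆ T ↔ f S ⊆ f T))
    (N : ℕ) (hN : (f X).card = N)
    (I : Finset α) (hIne : I.Nonempty) (hIX : I ⊆ X) :
    (I.inf' hIne fun a => f (X.erase a)).card + I.card ≤ N := by
  rw [inf'_image_erase_eq_commonTopChildren hord, ← hN]
  exact card_commonTopChildren_add_card_le hord hIX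

/-- Let `f : 2^X → 2^Y` be a poset embedding between power
sets of finite sets, with top element `f X` of cardinality `N`. Then for every
nonempty `I ⊆ X`, the intersection of the top children `f (X \ {a})`, `a ∈ I`,
has cardinality at most `N - |I|`. -/
theorem statement3 {α β : Type*} [DecidableEq α] [DecidableEq β]
    (X : Finset α) (Y : Finset β) (f : Finset α → Finset β)
    (hmap : ∀ S, S ⊆ X → f S ⊆ Y)
    (hord : ∀ S T, S ⊆ X → T ⊆ X → (S ⊆ T ↔ f S ⊆ f T))
    (hinj : ∀ S T, S ⊆ X → T ⊆ X → f S = f T → S = T)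
    (N : ℕ) (hN : (f X).card = N)
    (I : Finset α) (hIne : I.Nonempty) (hIX : I ⊆ X) :
    (I.inf' hIne fun a => f (X.erase a)).card + I.card ≤ N :=
  statement3_general X f hord N hN I hIne hIX
end

section
/- Let R ⊆ 2^[2n] be a restrictive collection and let S ∈ R. Then there exists S⁺ ⊆ [2n] with S ⊆ S⁺ and |S⁺| = n + ⌊n/2⌋ such that the collection R ∪ {S⁺} is again restrictive. -/
open Finset BigOperators

/-- The ground set `[m] = {1, ..., m}`. -/
def ground (m : ℕ) : Finset ℕ := Finset.Icc 1 m

/-- `f` is a poset embedding of `2^[n]` into `2^[m]`: it maps subsets of `[n]`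
to subsets of `[m]`, is injective, and satisfies `S ⊆ T ↔ f S ⊆ f T`. -/
def IsEmbedding (n m : ℕ) (f : Finset ℕ → Finset ℕ) : Prop :=
  (∀ S, S ⊆ ground n → f S ⊆ ground m) ∧
  (∀ S T, S ⊆ ground n → T ⊆ ground n → (S ⊆ T ↔ f S ⊆ f T)) ∧
  (∀ S T, S ⊆ ground n → T ⊆ ground n → f S = f T → S = T)

/-- `Q` is a copy of `2^[n]` in `2^[m]`: the image of the powerset of `[n]`
under some poset embedding. -/
def IsCopy (n m : ℕ) (Q : Finset (Finset ℕ)) : Prop :=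
  ∃ f, IsEmbedding n m f ∧ Q = (ground n).powerset.image f

/-- The `k`-th pair `{2k-1, 2k}` is contained in `S`. -/
def PairIn (k : ℕ) (S : Finset ℕ) : Prop := 2*k - 1 ∈ S ∧ 2*k ∈ S

/-- `S` has a pair: it contains both elements of some pair. -/
def HasPair (n : ℕ) (S : Finset ℕ) : Prop := ∃ k ∈ Finset.Icc 1 n, PairIn k S

/-- `S` misses a pair: it contains neither element of some pair. -/
def MissesPair (n : ℕ) (S : Finset ℕ) : Prop :=
  ∃ k ∈ Finset.Icc 1 n, 2*k - 1 ∉ S ∧ 2*k ∉ S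

/-- The partner of `x`: the other element of the pair containing `x`. -/
def partner (x : ℕ) : ℕ := if x % 2 = 0 then x - 1 else x + 1

/-- `x` is a single in `S`: `x ∈ S` but its partner is not in `S`. -/
def IsSingleIn (x : ℕ) (S : Finset ℕ) : Prop := x ∈ S ∧ partner x ∉ S

/-- The indices of the pairs fully contained in `S`. -/
def pairIndices (n : ℕ) (S : Finset ℕ) : Finset ℕ :=
  (Finset.Icc 1 n).filter (fun k => 2*k - 1 ∈ S ∧ 2*k ∈ S)

/-- The set of singles of `S`. -/
def singles (S : Finset ℕ) : Finset ℕ := S.filter (fun x => partner x ∉ S)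

/-- Every `S ∈ R` with `⌈n/2⌉ ≤ |S| < n` has a pair. -/
def PairEnforcing (n : ℕ) (R : Set (Finset ℕ)) : Prop :=
  ∀ S ∈ R, (n + 1) / 2 ≤ S.card → S.card < n → HasPair n S

/-- Every `S ∈ R` with `n < |S| ≤ n + ⌊n/2⌋` misses no pair. -/
def MissForbidding (n : ℕ) (R : Set (Finset ℕ)) : Prop :=
  ∀ S ∈ R, n < S.card → S.card ≤ n + n / 2 → ¬ MissesPair n S

/-- Every `S ∈ R` has `|S| ≤ n + ⌊n/2⌋`. -/
def NotTooHigh (n : ℕ) (R : Set (Finset ℕ)) : Prop :=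
  ∀ S ∈ R, S.card ≤ n + n / 2

/-- Whenever `S₁, S₂ ⊆ [2n]` have size `n`, `|S₁ ∪ S₂| = n + 1` and neither has
a pair, at most one of them is in `R`. -/
def FlipSusceptible (n : ℕ) (R : Set (Finset ℕ)) : Prop :=
  ∀ S₁ S₂ : Finset ℕ, S₁ ⊆ ground (2*n) → S₂ ⊆ ground (2*n) →
    S₁.card = n → S₂.card = n → (S₁ ∪ S₂).card = n + 1 →
    ¬ HasPair n S₁ → ¬ HasPair n S₂ → ¬ (S₁ ∈ R ∧ S₂ ∈ R)

/-- `R` is restrictive: pair-enforcing, miss-forbidding, not-too-high and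
flip-susceptible. -/
def Restrictive (n : ℕ) (R : Set (Finset ℕ)) : Prop :=
  PairEnforcing n R ∧ MissForbidding n R ∧ NotTooHigh n R ∧ FlipSusceptible n R

/-!
Fill every pair that `S` misses with one element, then enlarge the result arbitrarily inside
`[2n]` to size `n + ⌊n/2⌋`; there is room because a set of size at most `n` misses at most
`(2n - |S|)/2` pairs. The new set misses no pair and has size at least `n`, so adding it can only
break flip-susceptibility when `n ≤ 1`, and then either some set of `R` above `S` already has the
target size or `S = ∅` and `R` has no set of size `n`.
-/

def missedPairs (n : ℕ) (S : Finset ℕ) : Finset ℕ :=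
  (Icc 1 n).filter fun k => 2*k - 1 ∉ S ∧ 2*k ∉ S

section MissedPairs

variable {n : ℕ} {S T : Finset ℕ}

theorem MissesPair.of_superset (hT : MissesPair n T) (hST : S ⊆ T) : MissesPair n S := by
  obtain ⟨k, hk, h₁, h₂⟩ := hT
  exact ⟨k, hk, fun h => h₁ (hST h), fun h => h₂ (hST h)⟩

theorem missedPairs_eq_empty (hS : ¬ MissesPair n S) : missedPairs n S = ∅ :=
  filter_eq_empty_iff.mpr fun k hk hmiss => hS ⟨k, hk, hmiss⟩

theorem card_add_two_mul_card_missedPairs_le (hS : S ⊆ ground (2*n)) :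
    S.card + 2 * (missedPairs n S).card ≤ 2*n := by
  set M := missedPairs n S
  have hM : ∀ k ∈ M, 1 ≤ k ∧ k ≤ n ∧ 2*k - 1 ∉ S ∧ 2*k ∉ S := by
    intro k hk
    simp only [M, missedPairs, mem_filter, mem_Icc] at hk
    exact ⟨hk.1.1, hk.1.2, hk.2⟩
  set A := M.image fun k => 2*k - 1
  set B := M.image fun k => 2*k
  have hA : A.card = M.card :=
    card_image_of_injOn fun a ha b hb h => by
      have := (hM a ha).1; have := (hM b hb).1; omega
  have hB : B.card = M.card := card_image_of_injective _ fun a b h => by omega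
  have hSA : Disjoint S A := disjoint_right.mpr fun x hx => by
    obtain ⟨k, hk, rfl⟩ := mem_image.mp hx
    exact (hM k hk).2.2.1
  have hSAB : Disjoint (S ∪ A) B := disjoint_right.mpr fun x hx => by
    obtain ⟨k, hk, rfl⟩ := mem_image.mp hx
    simp only [A, mem_union, mem_image, not_or, not_exists, not_and]
    exact ⟨(hM k hk).2.2.2, fun j hj => by have := (hM j hj).1; omega⟩
  have hsub : S ∪ A ∪ B ⊆ ground (2*n) := by
    refine union_subset (union_subset hS ?_) ?_ <;>
      · intro x hx
        obtain ⟨k, hk, rfl⟩ := mem_image.mp hx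
        have := hM k hk
        simp only [ground, mem_Icc]; omega
  calc S.card + 2 * M.card = (S ∪ A ∪ B).card := by
        rw [card_union_of_disjoint hSAB, card_union_of_disjoint hSA, hA, hB]; ring
    _ ≤ (ground (2*n)).card := card_le_card hsub
    _ = 2*n := by simp [ground]

theorem not_missesPair_union_image_missedPairs :
    ¬ MissesPair n (S ∪ (missedPairs n S).image (2 * ·)) := by
  rintro ⟨k, hk, h₁, h₂⟩
  simp only [mem_union, not_or] at h₁ h₂
  exact h₂.2 (mem_image_of_mem _ (mem_filter.mpr ⟨hk, h₁.1, h₂.1⟩))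

theorem exists_superset_card_eq_not_missesPair (hS : S ⊆ ground (2*n))
    (hcard : S.card ≤ n + n / 2) (hmiss : n < S.card → ¬ MissesPair n S) :
    ∃ S' : Finset ℕ, S ⊆ S' ∧ S' ⊆ ground (2*n) ∧ S'.card = n + n / 2 ∧
      ¬ MissesPair n S' := by
  set T := S ∪ (missedPairs n S).image (2 * ·)
  have hTsub : T ⊆ ground (2*n) := by
    refine union_subset hS fun x hx => ?_
    obtain ⟨k, hk, rfl⟩ := mem_image.mp hx
    simp only [missedPairs, mem_filter, mem_Icc] at hk
    simp only [ground, mem_Icc]; omega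
  have hTcard : T.card ≤ n + n / 2 := by
    by_cases hSn : S.card ≤ n
    · have hunion : T.card ≤ S.card + _ := card_union_le _ _
      have himage := card_image_le (s := missedPairs n S) (f := (2 * ·))
      have := card_add_two_mul_card_missedPairs_le hS
      omega
    · simp only [T, missedPairs_eq_empty (hmiss (by omega)), image_empty, union_empty]
      exact hcard
  obtain ⟨S', hTS', hS'sub, hS'card⟩ :=
    exists_subsuperset_card_eq hTsub hTcard (by simp [ground]; omega)
  exact ⟨S', subset_union_left.trans hTS', hS'sub, hS'card,
    fun h => not_missesPair_union_image_missedPairs (h.of_superset hTS')⟩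

end MissedPairs

section Insert

variable {n : ℕ} {R : Set (Finset ℕ)} {X : Finset ℕ}

theorem PairEnforcing.insert (hR : PairEnforcing n R) (hX : n ≤ X.card) :
    PairEnforcing n (insert X R) := by
  rintro S (rfl | hS) h₁ h₂
  · omega
  · exact hR S hS h₁ h₂

theorem MissForbidding.insert (hR : MissForbidding n R) (hX : ¬ MissesPair n X) :
    MissForbidding n (insert X R) := by
  rintro S (rfl | hS) h₁ h₂
  · exact hX
  · exact hR S hS h₁ h₂

theorem NotTooHigh.insert (hR : NotTooHigh n R) (hX : X.card ≤ n + n / 2) :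
    NotTooHigh n (insert X R) := by
  rintro S (rfl | hS)
  · exact hX
  · exact hR S hS

theorem FlipSusceptible.insert (hR : FlipSusceptible n R)
    (hX : X.card = n → ∀ Y ∈ R, Y.card ≠ n) : FlipSusceptible n (insert X R) := by
  rintro S₁ S₂ hS₁ hS₂ h₁ h₂ hunion hp₁ hp₂ ⟨rfl | hm₁, rfl | hm₂⟩
  · simp [h₁] at hunion
  · exact hX h₁ S₂ hm₂ h₂
  · exact hX h₂ S₁ hm₁ h₁
  · exact hR S₁ S₂ hS₁ hS₂ h₁ h₂ hunion hp₁ hp₂ ⟨hm₁, hm₂⟩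

theorem Restrictive.insert (hR : Restrictive n R) (hXlow : n ≤ X.card)
    (hXhigh : X.card ≤ n + n / 2) (hXmiss : ¬ MissesPair n X)
    (hXflip : X.card = n → ∀ Y ∈ R, Y.card ≠ n) : Restrictive n (insert X R) :=
  ⟨hR.1.insert hXlow, hR.2.1.insert hXmiss, hR.2.2.1.insert hXhigh, hR.2.2.2.insert hXflip⟩

end Insert

/-- If `R ⊆ 2^[2n]` is restrictive and `S ∈ R`, then there is
`S⁺ ⊇ S` with `|S⁺| = n + ⌊n/2⌋` such that `R ∪ {S⁺}` is again restrictive. -/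
theorem statement4 (n : ℕ) (R : Set (Finset ℕ))
    (hRsub : ∀ S ∈ R, S ⊆ ground (2*n)) (hR : Restrictive n R)
    (S : Finset ℕ) (hS : S ∈ R) :
    ∃ S' : Finset ℕ, S ⊆ S' ∧ S' ⊆ ground (2*n) ∧ S'.card = n + n / 2 ∧
      Restrictive n (insert S' R) := by
  by_cases hY : ∃ Y ∈ R, S ⊆ Y ∧ Y.card = n + n / 2
  · obtain ⟨Y, hYR, hSY, hYcard⟩ := hY
    exact ⟨Y, hSY, hRsub Y hYR, hYcard, by rwa [Set.insert_eq_of_mem hYR]⟩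
  push Not at hY
  have hShigh := hR.2.2.1 S hS
  obtain ⟨S', hSS', hS'sub, hS'card, hS'miss⟩ :=
    exists_superset_card_eq_not_missesPair (hRsub S hS) hShigh
      fun h => hR.2.1 S hS h hShigh
  refine ⟨S', hSS', hS'sub, hS'card, hR.insert (by omega) hS'card.le hS'miss ?_⟩
  -- Here `n ≤ 1`, so `|S| ≤ 1` forces `S = ∅` or `|S| = n + ⌊n/2⌋`; both are excluded by `hY`.
  intro hS'n Y hYR hYcard
  have hSsmall : S.card ≤ n := hS'n ▸ card_le_card hSS'
  rcases Nat.eq_zero_or_pos S.card with hS0 | hSpos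
  · exact hY Y hYR (by simp [card_eq_zero.mp hS0]) (by omega)
  · exact hY S hS subset_rfl (by omega)
end

section
/- If a restrictive collection R ⊆ 2^[2n] contains a copy of 2^[n] (the image of some poset embedding f : 2^[n] → 2^[2n]), then there exists a restrictive collection R⁺ ⊇ R that contains a maximal copy of 2^[n], i.e., a copy whose top element has cardinality n + ⌊n/2⌋. -/
open Finset BigOperators

/-- If a restrictive collection `R ⊆ 2^[2n]` contains a copy
of `2^[n]`, then some restrictive collection `R⁺ ⊇ R` contains a maximal copy
of `2^[n]`, i.e. one whose top element has cardinality `n + ⌊n/2⌋`. -/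
theorem statement5 (n : ℕ) (R : Set (Finset ℕ))
    (hRsub : ∀ S ∈ R, S ⊆ ground (2*n)) (hR : Restrictive n R)
    (hcopy : ∃ f : Finset ℕ → Finset ℕ, IsEmbedding n (2*n) f ∧
        ∀ S, S ⊆ ground n → f S ∈ R) :
    ∃ R' : Set (Finset ℕ), R ⊆ R' ∧ (∀ S ∈ R', S ⊆ ground (2*n)) ∧
      Restrictive n R' ∧
      ∃ g : Finset ℕ → Finset ℕ, IsEmbedding n (2*n) g ∧
        (∀ S, S ⊆ ground n → g S ∈ R') ∧ (g (ground n)).card = n + n / 2 := by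
  classical
  obtain ⟨f, ⟨hf1, hf2, hf3⟩, hfR⟩ := hcopy
  set A := f (ground n) with hA
  have hAR : A ∈ R := hfR _ (Finset.Subset.refl _)
  have hAsub : A ⊆ ground (2*n) := hf1 _ (Finset.Subset.refl _)
  -- the chain argument: n ≤ A.card
  have hchain : ∀ j, j ≤ n → j ≤ (f (Finset.Icc 1 j)).card := by
    intro j
    induction j with
    | zero => intro _; exact Nat.zero_le _
    | succ j ih =>
      intro hj
      have hj' : j ≤ n := Nat.le_of_succ_le hj
      have h1 : Finset.Icc 1 j ⊆ ground n := by
        intro x hx; simp only [ground, Finset.mem_Icc] at *; omega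
      have h2 : Finset.Icc 1 (j+1) ⊆ ground n := by
        intro x hx; simp only [ground, Finset.mem_Icc] at *; omega
      have hsub : f (Finset.Icc 1 j) ⊆ f (Finset.Icc 1 (j+1)) := by
        apply (hf2 _ _ h1 h2).mp
        intro x hx; simp only [Finset.mem_Icc] at *; omega
      have hne : f (Finset.Icc 1 j) ≠ f (Finset.Icc 1 (j+1)) := by
        intro h
        have heq := hf3 _ _ h1 h2 h
        have hmem : (j+1) ∈ Finset.Icc 1 j := by
          rw [heq]; simp
        simp only [Finset.mem_Icc] at hmem; omega
      have hlt := Finset.card_lt_card (Finset.ssubset_iff_subset_ne.2 ⟨hsub, hne⟩)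
      have := ih hj'
      omega
  have hAn : n ≤ A.card := hchain n le_rfl
  have hAtop : A.card ≤ n + n / 2 := hR.2.2.1 A hAR
  set miss := (Finset.Icc 1 n).filter (fun k => 2*k - 1 ∉ A ∧ 2*k ∉ A) with hmiss
  set O := miss.image (fun k => 2*k - 1) with hO
  set E := miss.image (fun k => 2*k) with hE
  have hmissIcc : ∀ k ∈ miss, 1 ≤ k ∧ k ≤ n := by
    intro k hk
    have := (Finset.mem_filter.1 hk).1
    simpa [Finset.mem_Icc] using this
  have hOcard : O.card = miss.card := by
    apply Finset.card_image_of_injOn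
    intro x hx y hy hxy
    have h1 := hmissIcc x hx
    have h2 := hmissIcc y hy
    dsimp only at hxy
    omega
  have hEcard : E.card = miss.card := by
    apply Finset.card_image_of_injOn
    intro x hx y hy hxy
    have h1 := hmissIcc x hx
    have h2 := hmissIcc y hy
    dsimp only at hxy
    omega
  have hdisjAO : Disjoint A O := by
    rw [Finset.disjoint_right]
    intro x hx hxA
    obtain ⟨k, hk, rfl⟩ := Finset.mem_image.1 hx
    exact ((Finset.mem_filter.1 hk).2).1 hxA
  have hdisjAE : Disjoint A E := by
    rw [Finset.disjoint_right]
    intro x hx hxA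
    obtain ⟨k, hk, rfl⟩ := Finset.mem_image.1 hx
    exact ((Finset.mem_filter.1 hk).2).2 hxA
  have hdisjOE : Disjoint O E := by
    rw [Finset.disjoint_left]
    intro x hx hx'
    obtain ⟨k, hk, rfl⟩ := Finset.mem_image.1 hx
    obtain ⟨j, hj, hje⟩ := Finset.mem_image.1 hx'
    have h1 := hmissIcc k hk
    have h2 := hmissIcc j hj
    omega
  have hgroundcard : (ground (2*n)).card = 2*n := by
    simp [ground, Nat.card_Icc]
  have hkey : A.card + 2 * miss.card ≤ 2*n := by
    have hsub : A ∪ O ∪ E ⊆ ground (2*n) := by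
      intro x hx
      rcases Finset.mem_union.1 hx with hx | hx
      · rcases Finset.mem_union.1 hx with hx | hx
        · exact hAsub hx
        · obtain ⟨k, hk, rfl⟩ := Finset.mem_image.1 hx
          have := hmissIcc k hk
          simp only [ground, Finset.mem_Icc]; omega
      · obtain ⟨k, hk, rfl⟩ := Finset.mem_image.1 hx
        have := hmissIcc k hk
        simp only [ground, Finset.mem_Icc]; omega
    have hc1 : (A ∪ O ∪ E).card = A.card + O.card + E.card := by
      rw [Finset.card_union_of_disjoint, Finset.card_union_of_disjoint hdisjAO]
      rw [Finset.disjoint_union_left]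
      exact ⟨hdisjAE, hdisjOE⟩
    have := Finset.card_le_card hsub
    rw [hc1, hgroundcard] at this
    omega
  have hm0 : n < A.card → miss = ∅ := by
    intro h
    by_contra hne
    obtain ⟨k, hk⟩ := Finset.nonempty_iff_ne_empty.2 hne
    have hmf := hR.2.1 A hAR h hAtop
    exact hmf ⟨k, (Finset.mem_filter.1 hk).1, (Finset.mem_filter.1 hk).2⟩
  set B := A ∪ E with hB
  have hBcard : B.card ≤ n + n / 2 := by
    rcases le_or_gt A.card n with h | h
    · have h1 : B.card ≤ A.card + E.card := Finset.card_union_le _ _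
      omega
    · have hme : miss = ∅ := hm0 h
      have : E = ∅ := by rw [hE, hme]; simp
      rw [hB, this, Finset.union_empty]
      exact hAtop
  have hBsub : B ⊆ ground (2*n) := by
    intro x hx
    rcases Finset.mem_union.1 hx with hx | hx
    · exact hAsub hx
    · obtain ⟨k, hk, rfl⟩ := Finset.mem_image.1 hx
      have := hmissIcc k hk
      simp only [ground, Finset.mem_Icc]; omega
  obtain ⟨X, hBX, hXg, hXcard⟩ :=
    Finset.exists_subsuperset_card_eq hBsub hBcard (by rw [hgroundcard]; omega)
  have hAX : A ⊆ X := fun x hx => hBX (Finset.mem_union_left _ hx)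
  have hXmiss : ¬ MissesPair n X := by
    rintro ⟨k, hk, h1, h2⟩
    by_cases hkA : 2*k - 1 ∈ A ∨ 2*k ∈ A
    · rcases hkA with hkA | hkA
      · exact h1 (hAX hkA)
      · exact h2 (hAX hkA)
    · push_neg at hkA
      have hkm : k ∈ miss := Finset.mem_filter.2 ⟨hk, hkA.1, hkA.2⟩
      have : 2*k ∈ E := Finset.mem_image.2 ⟨k, hkm, rfl⟩
      exact h2 (hBX (Finset.mem_union_right _ this))
  have hXR : X.card = n → X ∈ R := by
    intro h
    have hXA : A = X := Finset.eq_of_subset_of_card_le hAX (by omega)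
    rw [← hXA]; exact hAR
  set g : Finset ℕ → Finset ℕ := fun S => if S = ground n then X else f S with hg
  set R' : Set (Finset ℕ) := insert X R with hR'
  have hfA : ∀ S, S ⊆ ground n → f S ⊆ A :=
    fun S hS => (hf2 S (ground n) hS (Finset.Subset.refl _)).mp hS
  have hXnot : ∀ T, T ⊆ ground n → X ⊆ f T → T = ground n := by
    intro T hT hXT
    have h1 : A ⊆ f T := fun x hx => hXT (hAX hx)
    have h2 := (hf2 (ground n) T (Finset.Subset.refl _) hT).mpr h1
    exact Finset.Subset.antisymm hT h2
  have hmemR' : ∀ S, S ∈ R' → S = X ∨ S ∈ R := fun S hS => hS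
  refine ⟨R', Set.subset_insert _ _, ?_, ⟨?_, ?_, ?_, ?_⟩, g, ⟨?_, ?_, ?_⟩, ?_, ?_⟩
  · -- subsets of ground
    intro S hS
    rcases hmemR' S hS with rfl | h
    · exact hXg
    · exact hRsub S h
  · -- PairEnforcing
    intro S hS h1 h2
    rcases hmemR' S hS with rfl | h
    · omega
    · exact hR.1 S h h1 h2
  · -- MissForbidding
    intro S hS h1 h2
    rcases hmemR' S hS with rfl | h
    · exact hXmiss
    · exact hR.2.1 S h h1 h2
  · -- NotTooHigh
    intro S hS
    rcases hmemR' S hS with rfl | h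
    · omega
    · exact hR.2.2.1 S h
  · -- FlipSusceptible
    intro S₁ S₂ h₁ h₂ hc₁ hc₂ hu hp₁ hp₂ hmem
    obtain ⟨m₁, m₂⟩ := hmem
    have m₁' : S₁ ∈ R := by
      rcases hmemR' S₁ m₁ with rfl | h
      · exact hXR hc₁
      · exact h
    have m₂' : S₂ ∈ R := by
      rcases hmemR' S₂ m₂ with rfl | h
      · exact hXR hc₂
      · exact h
    exact hR.2.2.2 S₁ S₂ h₁ h₂ hc₁ hc₂ hu hp₁ hp₂ ⟨m₁', m₂'⟩
  · -- embedding: into ground 2n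
    intro S hS
    by_cases h : S = ground n
    · simp only [hg, h, if_pos rfl]; exact hXg
    · simp only [hg, if_neg h]; exact hf1 S hS
  · -- embedding: order iff
    intro S T hS hT
    by_cases hSt : S = ground n <;> by_cases hTt : T = ground n
    · subst hSt; subst hTt; simp [hg]
    · subst hSt
      simp only [hg, if_pos rfl, if_neg hTt]
      constructor
      · intro h
        exact absurd (Finset.Subset.antisymm hT h) hTt
      · intro h
        exact absurd (hXnot T hT h) hTt
    · subst hTt
      simp only [hg, if_neg hSt, if_pos rfl]
      constructor
      · intro _
        exact fun x hx => hAX (hfA S hS hx)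
      · intro _; exact hS
    · simp only [hg, if_neg hSt, if_neg hTt]
      exact hf2 S T hS hT
  · -- embedding: injective
    intro S T hS hT h
    by_cases hSt : S = ground n <;> by_cases hTt : T = ground n
    · rw [hSt, hTt]
    · subst hSt
      simp only [hg, if_pos rfl, if_neg hTt] at h
      exact absurd (hXnot T hT (h ▸ Finset.Subset.refl X)) hTt
    · subst hTt
      simp only [hg, if_neg hSt, if_pos rfl] at h
      exact absurd (hXnot S hS (h ▸ Finset.Subset.refl X)) hSt
    · simp only [hg, if_neg hSt, if_neg hTt] at h
      exact hf3 S T hS hT h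
  · -- images in R'
    intro S hS
    by_cases h : S = ground n
    · simp only [hg, h, if_pos rfl]
      exact Set.mem_insert _ _
    · simp only [hg, if_neg h]
      exact Set.mem_insert_of_mem _ (hfR S hS)
  · -- top cardinality
    simp only [hg, if_pos rfl]
    exact hXcard
end

section
/- Let R ⊆ 2^[2n] be a restrictive collection and let f : 2^[n] → 2^[2n] be a poset embedding whose image is contained in R and whose top element f([n]) has cardinality n + ⌊n/2⌋. If a top child f([n] \ {a}) does not contain some single of f([n]), then |f([n] \ {a})| ≤ n and f([n] \ {a}) contains all ⌊n/2⌋ pairs contained in f([n]). -/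
open Finset BigOperators

lemma ground_card (m : ℕ) : (ground m).card = m := by
  simp [ground]

lemma mem_ground {x m : ℕ} : x ∈ ground m ↔ 1 ≤ x ∧ x ≤ m := by
  simp [ground]

lemma embed_mono {n m : ℕ} {f : Finset ℕ → Finset ℕ} (hf : IsEmbedding n m f)
    {S T : Finset ℕ} (hS : S ⊆ ground n) (hT : T ⊆ ground n) (h : S ⊆ T) :
    f S ⊆ f T := (hf.2.1 S T hS hT).mp h

lemma embed_card_aux {n m : ℕ} {f : Finset ℕ → Finset ℕ} (hf : IsEmbedding n m f) :
    ∀ (k : ℕ) (S T : Finset ℕ), S ⊆ ground n → T ⊆ ground n → S ⊆ T →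
      (T \ S).card = k → (f S).card + k ≤ (f T).card := by
  intro k
  induction k with
  | zero =>
    intro S T hS hT hST hc
    have h1 : T ⊆ S := by
      rw [← Finset.sdiff_eq_empty_iff_subset]
      exact Finset.card_eq_zero.mp hc
    have h2 : S = T := Finset.Subset.antisymm hST h1
    simp [h2]
  | succ k ih =>
    intro S T hS hT hST hc
    have hne : (T \ S).Nonempty := Finset.card_pos.mp (by omega)
    obtain ⟨t, ht⟩ := hne
    rw [Finset.mem_sdiff] at ht
    have hS' : insert t S ⊆ T := Finset.insert_subset ht.1 hST
    have hS'g : insert t S ⊆ ground n := hS'.trans hT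
    have hstep : (f S).card < (f (insert t S)).card := by
      apply Finset.card_lt_card
      refine (embed_mono hf hS hS'g (Finset.subset_insert _ _)).ssubset_of_ne ?_
      intro he
      have h3 := hf.2.2 _ _ hS hS'g he
      have : t ∈ S := by rw [h3]; exact Finset.mem_insert_self t S
      exact ht.2 this
    have hc' : (T \ insert t S).card = k := by
      have h1 : T \ insert t S = (T \ S).erase t := Finset.sdiff_insert T S t
      have h2 := Finset.card_erase_of_mem (Finset.mem_sdiff.mpr ht)
      rw [h1, h2, hc]
      omega
    have := ih (insert t S) T hS'g hT hS' hc'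
    omega

lemma embed_card {n m : ℕ} {f : Finset ℕ → Finset ℕ} (hf : IsEmbedding n m f)
    {S T : Finset ℕ} (hS : S ⊆ ground n) (hT : T ⊆ ground n) (hST : S ⊆ T) :
    (f S).card + (T \ S).card ≤ (f T).card :=
  embed_card_aux hf _ S T hS hT hST rfl

lemma two_elt {A : Finset ℕ} {a : ℕ} (hA : A.card = 2) (ha : a ∈ A) :
    ∃ w, w ≠ a ∧ A = {a, w} := by
  have h1 : (A.erase a).card = 1 := by rw [Finset.card_erase_of_mem ha, hA]
  obtain ⟨w, hw⟩ := Finset.card_eq_one.mp h1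
  have hwm : w ∈ A.erase a := hw ▸ Finset.mem_singleton_self w
  refine ⟨w, (Finset.mem_erase.mp hwm).1, ?_⟩
  rw [← Finset.insert_erase ha, hw]

lemma inter_family (𝒜 : Finset (Finset ℕ)) (h2 : ∀ A ∈ 𝒜, A.card = 2)
    (hint : ∀ A ∈ 𝒜, ∀ B ∈ 𝒜, A ≠ B → (A ∩ B).Nonempty) :
    𝒜.card ≤ (𝒜.biUnion id).card := by
  classical
  rcases Finset.eq_empty_or_nonempty 𝒜 with h | ⟨A₀, hA₀⟩
  · simp [h]
  have hA₀sub : A₀ ⊆ 𝒜.biUnion id := Finset.subset_biUnion_of_mem id hA₀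
  have h2u : 2 ≤ (𝒜.biUnion id).card := by
    have := Finset.card_le_card hA₀sub
    rw [h2 A₀ hA₀] at this
    exact this
  by_cases hA2 : 𝒜.card ≤ 2
  · omega
  push_neg at hA2
  by_cases hcom : ∃ a, ∀ A ∈ 𝒜, a ∈ A
  · obtain ⟨a, hacom⟩ := hcom
    set g : Finset ℕ → ℕ := fun A =>
      if h : ∃ w, w ≠ a ∧ A = {a, w} then h.choose else 0 with hg
    have hgspec : ∀ A ∈ 𝒜, g A ≠ a ∧ A = {a, g A} := by
      intro A hA
      have hex : ∃ w, w ≠ a ∧ A = {a, w} := two_elt (h2 A hA) (hacom A hA)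
      simp only [hg, dif_pos hex]
      exact hex.choose_spec
    have hle : 𝒜.card ≤ ((𝒜.biUnion id).erase a).card := by
      apply Finset.card_le_card_of_injOn g
      · intro A hA
        obtain ⟨hne, hAe⟩ := hgspec A hA
        refine Finset.mem_erase.mpr ⟨hne, ?_⟩
        have hmem : g A ∈ A := by
          have hmm : g A ∈ ({a, g A} : Finset ℕ) :=
            Finset.mem_insert_of_mem (Finset.mem_singleton_self _)
          rwa [← hAe] at hmm
        exact Finset.mem_biUnion.mpr ⟨A, hA, hmem⟩
      · intro A hA B hB hAB
        obtain ⟨_, hAe⟩ := hgspec A hA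
        obtain ⟨_, hBe⟩ := hgspec B hB
        calc A = {a, g A} := hAe
          _ = {a, g B} := by rw [hAB]
          _ = B := hBe.symm
    calc 𝒜.card ≤ ((𝒜.biUnion id).erase a).card := hle
      _ ≤ (𝒜.biUnion id).card := Finset.card_le_card (Finset.erase_subset _ _)
  · push_neg at hcom
    obtain ⟨A₁, hA₁, A₂, hA₂, hA12⟩ := Finset.one_lt_card.mp (by omega : 1 < 𝒜.card)
    obtain ⟨a, haI⟩ := hint A₁ hA₁ A₂ hA₂ hA12
    have ha1 : a ∈ A₁ := (Finset.mem_inter.mp haI).1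
    have ha2 : a ∈ A₂ := (Finset.mem_inter.mp haI).2
    obtain ⟨A₃, hA₃, ha3⟩ := hcom a
    obtain ⟨p, hpa, hA₁e⟩ := two_elt (h2 A₁ hA₁) ha1
    obtain ⟨q, hqa, hA₂e⟩ := two_elt (h2 A₂ hA₂) ha2
    have hpq : p ≠ q := by
      intro h
      apply hA12
      rw [hA₁e, hA₂e, h]
    have hA₃ne1 : A₃ ≠ A₁ := fun h => ha3 (h ▸ ha1)
    have hA₃ne2 : A₃ ≠ A₂ := fun h => ha3 (h ▸ ha2)
    have hp3 : p ∈ A₃ := by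
      obtain ⟨z, hz⟩ := hint A₃ hA₃ A₁ hA₁ hA₃ne1
      rw [Finset.mem_inter] at hz
      have : z = a ∨ z = p := by
        have := hz.2; rw [hA₁e] at this; simpa using this
      rcases this with rfl | rfl
      · exact absurd hz.1 ha3
      · exact hz.1
    have hq3 : q ∈ A₃ := by
      obtain ⟨z, hz⟩ := hint A₃ hA₃ A₂ hA₂ hA₃ne2
      rw [Finset.mem_inter] at hz
      have : z = a ∨ z = q := by
        have := hz.2; rw [hA₂e] at this; simpa using this
      rcases this with rfl | rfl
      · exact absurd hz.1 ha3
      · exact hz.1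
    have hA₃e : A₃ = {p, q} := by
      have hsub : ({p, q} : Finset ℕ) ⊆ A₃ := by
        intro z hz; simp at hz; rcases hz with rfl | rfl
        · exact hp3
        · exact hq3
      have hc2 : ({p, q} : Finset ℕ).card = 2 := by
        rw [Finset.card_insert_of_notMem (by simpa using hpq), Finset.card_singleton]
      exact (Finset.eq_of_subset_of_card_le hsub (by rw [h2 A₃ hA₃, hc2])).symm
    have hsub3 : 𝒜 ⊆ {A₁, A₂, A₃} := by
      intro A hA
      simp only [Finset.mem_insert, Finset.mem_singleton]
      by_cases haA : a ∈ A
      · obtain ⟨w, hwa, hAe⟩ := two_elt (h2 A hA) haA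
        have hAne3 : A ≠ A₃ := fun h => ha3 (h ▸ haA)
        obtain ⟨z, hz⟩ := hint A hA A₃ hA₃ hAne3
        rw [Finset.mem_inter] at hz
        have hzw : z = a ∨ z = w := by
          have := hz.1; rw [hAe] at this; simpa using this
        have hza : z ≠ a := fun h => ha3 (h ▸ hz.2)
        have hzw' : z = w := by tauto
        have hw' : w ∈ ({p, q} : Finset ℕ) := by
          rw [← hA₃e, ← hzw']; exact hz.2
        have : w = p ∨ w = q := by simpa using hw'
        rcases this with rfl | rfl
        · left; rw [hAe, hA₁e]
        · right; left; rw [hAe, hA₂e]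
      · have hAne1 : A ≠ A₁ := fun h => haA (h ▸ ha1)
        have hAne2 : A ≠ A₂ := fun h => haA (h ▸ ha2)
        obtain ⟨z₁, hz₁⟩ := hint A hA A₁ hA₁ hAne1
        obtain ⟨z₂, hz₂⟩ := hint A hA A₂ hA₂ hAne2
        rw [Finset.mem_inter] at hz₁ hz₂
        have hpz : p ∈ A := by
          have : z₁ = a ∨ z₁ = p := by
            have := hz₁.2; rw [hA₁e] at this; simpa using this
          rcases this with rfl | rfl
          · exact absurd hz₁.1 haA
          · exact hz₁.1
        have hqz : q ∈ A := by
          have : z₂ = a ∨ z₂ = q := by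
            have := hz₂.2; rw [hA₂e] at this; simpa using this
          rcases this with rfl | rfl
          · exact absurd hz₂.1 haA
          · exact hz₂.1
        right; right
        have hsub : ({p, q} : Finset ℕ) ⊆ A := by
          intro z hz; simp at hz; rcases hz with rfl | rfl
          · exact hpz
          · exact hqz
        have hc2 : ({p, q} : Finset ℕ).card = 2 := by
          rw [Finset.card_insert_of_notMem (by simpa using hpq), Finset.card_singleton]
        rw [(Finset.eq_of_subset_of_card_le hsub (by rw [h2 A hA, hc2])).symm, hA₃e]
    have hcard3 : 𝒜.card ≤ 3 := by
      refine le_trans (Finset.card_le_card hsub3) ?_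
      refine le_trans (Finset.card_insert_le _ _) ?_
      have := Finset.card_insert_le A₂ ({A₃} : Finset (Finset ℕ))
      simp at this ⊢
      omega
    have h3u : 3 ≤ (𝒜.biUnion id).card := by
      have hsubu : ({a, p, q} : Finset ℕ) ⊆ 𝒜.biUnion id := by
        intro z hz
        simp only [Finset.mem_insert, Finset.mem_singleton] at hz
        rcases hz with rfl | rfl | rfl
        · exact Finset.mem_biUnion.mpr ⟨A₁, hA₁, ha1⟩
        · exact Finset.mem_biUnion.mpr ⟨A₁, hA₁, by rw [hA₁e]; simp⟩
        · exact Finset.mem_biUnion.mpr ⟨A₂, hA₂, by rw [hA₂e]; simp⟩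
      have hc3 : ({a, p, q} : Finset ℕ).card = 3 := by
        rw [Finset.card_insert_of_notMem (by simp; exact ⟨Ne.symm hpa, Ne.symm hqa⟩),
          Finset.card_insert_of_notMem (by simpa using hpq), Finset.card_singleton]
      have := Finset.card_le_card hsubu
      omega
    omega

lemma pair_count {n : ℕ} {T : Finset ℕ} (hT : T ⊆ ground (2*n))
    (hmiss : ∀ k ∈ Finset.Icc 1 n, 2*k-1 ∈ T ∨ 2*k ∈ T) :
    n + (pairIndices n T).card ≤ T.card := by
  classical
  have hmap : ∀ t ∈ T, (t+1)/2 ∈ Finset.Icc 1 n := by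
    intro t ht
    have := mem_ground.mp (hT ht)
    rw [Finset.mem_Icc]
    omega
  rw [Finset.card_eq_sum_card_fiberwise hmap]
  have hbound : ∀ k ∈ Finset.Icc 1 n,
      (if k ∈ pairIndices n T then 2 else 1) ≤ (T.filter fun t => (t+1)/2 = k).card := by
    intro k hk
    have hk1 := Finset.mem_Icc.mp hk
    by_cases hp : k ∈ pairIndices n T
    · simp only [if_pos hp]
      have hmemf := (Finset.mem_filter.mp hp).2
      have hsub : ({2*k-1, 2*k} : Finset ℕ) ⊆ T.filter (fun t => (t+1)/2 = k) := by
        intro z hz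
        simp only [Finset.mem_insert, Finset.mem_singleton] at hz
        rcases hz with rfl | rfl
        · exact Finset.mem_filter.mpr ⟨hmemf.1, by omega⟩
        · exact Finset.mem_filter.mpr ⟨hmemf.2, by omega⟩
      have hc2 : ({2*k-1, 2*k} : Finset ℕ).card = 2 := by
        rw [Finset.card_insert_of_notMem (by simp; omega), Finset.card_singleton]
      have := Finset.card_le_card hsub
      omega
    · simp only [if_neg hp]
      rcases hmiss k hk with h | h
      · exact Finset.card_pos.mpr ⟨2*k-1, Finset.mem_filter.mpr ⟨h, by omega⟩⟩
      · exact Finset.card_pos.mpr ⟨2*k, Finset.mem_filter.mpr ⟨h, by omega⟩⟩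
  have hsum := Finset.sum_le_sum hbound
  have hlhs : (∑ k ∈ Finset.Icc 1 n, (if k ∈ pairIndices n T then 2 else 1))
      = n + (pairIndices n T).card := by
    have hsplit : ∀ k, (if k ∈ pairIndices n T then (2:ℕ) else 1)
        = 1 + (if k ∈ pairIndices n T then 1 else 0) := by
      intro k; by_cases h : k ∈ pairIndices n T <;> simp [h]
    rw [Finset.sum_congr rfl (fun k _ => hsplit k), Finset.sum_add_distrib]
    have h1 : (∑ _k ∈ Finset.Icc 1 n, (1:ℕ)) = n := by simp
    have h2 : (∑ k ∈ Finset.Icc 1 n, (if k ∈ pairIndices n T then (1:ℕ) else 0))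
        = (pairIndices n T).card := by
      rw [Finset.sum_ite_mem]
      have : Finset.Icc 1 n ∩ pairIndices n T = pairIndices n T := by
        apply Finset.inter_eq_right.mpr
        intro z hz
        exact (Finset.mem_filter.mp hz).1
      rw [this]
      simp
    rw [h1, h2]
  omega

/-- In a maximal copy contained in a restrictive collection,
a top child missing some single of the top element has size at most `n` and
contains all `⌊n/2⌋` pairs of the top element. -/
theorem statement7 (n : ℕ) (R : Set (Finset ℕ))
    (hRsub : ∀ S ∈ R, S ⊆ ground (2*n)) (hR : Restrictive n R)
    (f : Finset ℕ → Finset ℕ) (hf : IsEmbedding n (2*n) f)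
    (himg : ∀ S, S ⊆ ground n → f S ∈ R)
    (htop : (f (ground n)).card = n + n / 2)
    (a : ℕ) (ha : a ∈ ground n)
    (x : ℕ) (hx : IsSingleIn x (f (ground n)))
    (hxa : x ∉ f ((ground n).erase a)) :
    (f ((ground n).erase a)).card ≤ n ∧
      ∀ k ∈ pairIndices n (f (ground n)), PairIn k (f ((ground n).erase a)) := by
  classical
  obtain ⟨hPE, hMF, hNTH, _hFS⟩ := hR
  set base := (ground n).erase a with hbase
  have hbsub : base ⊆ ground n := Finset.erase_subset _ _
  have hgg : (ground n) ⊆ ground n := Finset.Subset.rfl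
  have hCsubT : f base ⊆ f (ground n) := embed_mono hf hbsub hgg (Finset.erase_subset _ _)
  have hCR : f base ∈ R := himg _ hbsub
  have hTR : f (ground n) ∈ R := himg _ hgg
  have hTsub2n : f (ground n) ⊆ ground (2*n) := hf.1 _ hgg
  have hxT : x ∈ f (ground n) := hx.1
  have hpxT : partner x ∉ f (ground n) := hx.2
  have hxrange := mem_ground.mp (hTsub2n hxT)
  -- Part 1
  have hC_le : (f base).card ≤ n := by
    by_contra hlt
    push_neg at hlt
    have hnth := hNTH _ hCR
    apply hMF _ hCR hlt hnth
    refine ⟨(x+1)/2, by rw [Finset.mem_Icc]; omega, ?_, ?_⟩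
    · by_cases hpar : x % 2 = 0
      · have hpx : partner x = x - 1 := by simp [partner, hpar]
        have heq : 2*((x+1)/2) - 1 = partner x := by omega
        rw [heq]
        exact fun hc => hpxT (hCsubT hc)
      · have heq : 2*((x+1)/2) - 1 = x := by omega
        rw [heq]; exact hxa
    · by_cases hpar : x % 2 = 0
      · have heq : 2*((x+1)/2) = x := by omega
        rw [heq]; exact hxa
      · have hpx : partner x = x + 1 := by simp [partner, hpar]
        have heq : 2*((x+1)/2) = partner x := by omega
        rw [heq]
        exact fun hc => hpxT (hCsubT hc)
  refine ⟨hC_le, ?_⟩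
  -- Part 2
  intro k hk
  by_contra hnp
  have hkmem := Finset.mem_filter.mp hk
  have hkI : k ∈ Finset.Icc 1 n := hkmem.1
  obtain ⟨hk1T, hk2T⟩ := hkmem.2
  have hk1n := Finset.mem_Icc.mp hkI
  have hn2 : 2 ≤ n := by
    have hsub : ({2*k-1, 2*k} : Finset ℕ) ⊆ f (ground n) := by
      intro z hz
      simp only [Finset.mem_insert, Finset.mem_singleton] at hz
      rcases hz with rfl | rfl
      · exact hk1T
      · exact hk2T
    have hc2 : ({2*k-1, 2*k} : Finset ℕ).card = 2 := by
      rw [Finset.card_insert_of_notMem (by simp; omega), Finset.card_singleton]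
    have := Finset.card_le_card hsub
    omega
  have hv : ∃ v, v ∈ f (ground n) ∧ v ∉ f base ∧ (v = 2*k-1 ∨ v = 2*k) := by
    by_cases h1 : 2*k-1 ∈ f base
    · refine ⟨2*k, hk2T, ?_, Or.inr rfl⟩
      intro h2
      exact hnp ⟨h1, h2⟩
    · exact ⟨2*k-1, hk1T, h1, Or.inl rfl⟩
  obtain ⟨v, hvT, hvC, hvk⟩ := hv
  have hxv : x ≠ v := by
    intro h
    apply hpxT
    rw [h]
    rcases hvk with rfl | rfl
    · have hodd : ¬ (2*k-1) % 2 = 0 := by omega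
      have heq : partner (2*k-1) = 2*k := by
        simp only [partner, if_neg hodd]
        omega
      rw [heq]; exact hk2T
    · have heven : (2*k) % 2 = 0 := by omega
      have heq : partner (2*k) = 2*k-1 := by
        simp only [partner, if_pos heven]
      rw [heq]; exact hk1T
  have hmissT : ∀ j ∈ Finset.Icc 1 n, 2*j-1 ∈ f (ground n) ∨ 2*j ∈ f (ground n) := by
    have hnm := hMF _ hTR (by omega) (by omega)
    intro j hj
    by_contra hcon
    push_neg at hcon
    exact hnm ⟨j, hj, hcon.1, hcon.2⟩
  have hpT := pair_count hTsub2n hmissT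
  have hpCsub : pairIndices n (f base) ⊆ pairIndices n (f (ground n)) := by
    intro j hj
    have hj' := Finset.mem_filter.mp hj
    exact Finset.mem_filter.mpr ⟨hj'.1, hCsubT hj'.2.1, hCsubT hj'.2.2⟩
  have hknotC : k ∉ pairIndices n (f base) := by
    intro hc
    exact hnp ⟨(Finset.mem_filter.mp hc).2.1, (Finset.mem_filter.mp hc).2.2⟩
  have hqlt : (pairIndices n (f base)).card < (pairIndices n (f (ground n))).card := by
    apply Finset.card_lt_card
    exact hpCsub.ssubset_of_ne (fun h => hknotC (h ▸ hk))
  have hq1 : (pairIndices n (f base)).card + 1 ≤ n / 2 := by omega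
  have hbase_card : base.card = n - 1 := by
    rw [hbase, Finset.card_erase_of_mem ha, ground_card]
  have hC_ge : n - 1 ≤ (f base).card := by
    have h := embed_card hf (Finset.empty_subset _) hbsub (Finset.empty_subset _)
    rw [Finset.sdiff_empty] at h
    omega
  have hlow : ∀ S : Finset ℕ, S ⊆ base → S.card ≤ (f S).card := by
    intro S hS
    have h := embed_card hf (Finset.empty_subset _) (hS.trans hbsub) (Finset.empty_subset _)
    rw [Finset.sdiff_empty] at h
    omega
  have hub : ∀ S : Finset ℕ, S ⊆ base → (f S).card + (base \ S).card ≤ (f base).card :=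
    fun S hS => embed_card hf (hS.trans hbsub) hbsub hS
  have hfsubC : ∀ S : Finset ℕ, S ⊆ base → f S ⊆ f base :=
    fun S hS => embed_mono hf (hS.trans hbsub) hbsub hS
  by_cases hq0 : pairIndices n (f base) = ∅
  · -- q = 0
    have hnopair : ∀ S : Finset ℕ, S ⊆ base → ¬ HasPair n (f S) := by
      rintro S hS ⟨j, hjI, hj1, hj2⟩
      have hjm : j ∈ pairIndices n (f base) :=
        Finset.mem_filter.mpr ⟨hjI, hfsubC S hS hj1, hfsubC S hS hj2⟩
      rw [hq0] at hjm
      exact absurd hjm (Finset.notMem_empty j)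
    by_cases hCn : (f base).card = n
    · have hsub2 : f base ⊆ ((f (ground n)).erase v).erase x := by
        intro z hz
        exact Finset.mem_erase.mpr ⟨fun h => hxa (h ▸ hz),
          Finset.mem_erase.mpr ⟨fun h => hvC (h ▸ hz), hCsubT hz⟩⟩
      have hcc : (((f (ground n)).erase v).erase x).card = (f (ground n)).card - 1 - 1 := by
        rw [Finset.card_erase_of_mem (Finset.mem_erase.mpr ⟨hxv, hxT⟩),
          Finset.card_erase_of_mem hvT]
      have hle2 := Finset.card_le_card hsub2
      have hn4 : 4 ≤ n := by omega
      obtain ⟨b₀, hb₀⟩ : base.Nonempty := by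
        rw [← Finset.card_pos, hbase_card]; omega
      have hSsub : base.erase b₀ ⊆ base := Finset.erase_subset _ _
      have h1 := hub _ hSsub
      have h2 := hlow _ hSsub
      have h3 : (base.erase b₀).card = n - 1 - 1 := by
        rw [Finset.card_erase_of_mem hb₀, hbase_card]
      have hdiff : (base \ base.erase b₀).card = 1 := by
        have heq : base \ base.erase b₀ = {b₀} := by
          ext z
          simp only [Finset.mem_sdiff, Finset.mem_erase, Finset.mem_singleton]
          constructor
          · rintro ⟨hz1, hz2⟩
            by_contra hne
            exact hz2 ⟨hne, hz1⟩
          · rintro rfl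
            exact ⟨hb₀, fun h => h.1 rfl⟩
        rw [heq, Finset.card_singleton]
      rw [hdiff] at h1
      exact hnopair _ hSsub (hPE _ (himg _ (hSsub.trans hbsub)) (by omega) (by omega))
    · have hClt : (f base).card < n := lt_of_le_of_ne hC_le hCn
      exact hnopair base Finset.Subset.rfl (hPE _ hCR (by omega) hClt)
  · -- q ≥ 1
    set M : ℕ → Finset ℕ := fun b => f base \ f (base.erase b) with hM
    have hMdef : ∀ b, M b = f base \ f (base.erase b) := fun b => by rw [hM]
    have hMfact : ∀ b ∈ base, f (base.erase b) ⊆ f base ∧ 1 ≤ (M b).card ∧ (M b).card ≤ 2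
        ∧ f base \ M b = f (base.erase b) := by
      intro b hb
      have hsubb : base.erase b ⊆ base := Finset.erase_subset _ _
      have hsubg : base.erase b ⊆ ground n := hsubb.trans hbsub
      have hfsub : f (base.erase b) ⊆ f base := hfsubC _ hsubb
      have hne : f (base.erase b) ≠ f base := by
        intro h
        have h2 := hf.2.2 _ _ hsubg hbsub h
        have h3 : b ∈ base.erase b := by rw [h2]; exact hb
        exact (Finset.mem_erase.mp h3).1 rfl
      have hcle : (f (base.erase b)).card < (f base).card :=
        Finset.card_lt_card (hfsub.ssubset_of_ne hne)
      have hclow : (base.erase b).card ≤ (f (base.erase b)).card := hlow _ hsubb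
      have hbec : (base.erase b).card = base.card - 1 := Finset.card_erase_of_mem hb
      have hMc : (M b).card = (f base).card - (f (base.erase b)).card := by
        rw [hMdef]; exact Finset.card_sdiff_of_subset hfsub
      refine ⟨hfsub, by omega, by omega, ?_⟩
      rw [hMdef]
      exact Finset.sdiff_sdiff_eq_self hfsub
    have hU3 : ∀ b ∈ base, ∀ b' ∈ base, M b = M b' → b = b' := by
      intro b hb b' hb' hMM
      have h1 := (hMfact b hb).2.2.2
      have h2 := (hMfact b' hb').2.2.2
      have h3 : f (base.erase b) = f (base.erase b') := by rw [← h1, ← h2, hMM]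
      have h4 := hf.2.2 _ _ ((Finset.erase_subset _ _).trans hbsub)
        ((Finset.erase_subset _ _).trans hbsub) h3
      by_contra hne
      have h5 : b' ∈ base.erase b := Finset.mem_erase.mpr ⟨fun h => hne h.symm, hb'⟩
      rw [h4] at h5
      exact (Finset.mem_erase.mp h5).1 rfl
    have hU1 : ∀ b ∈ base, ∀ b' ∈ base, b ≠ b' → (M b).card = 1 →
        ∀ z, z ∈ M b → z ∉ M b' := by
      intro b hb b' hb' hne hc1 z hzb hzb'
      obtain ⟨w, hw⟩ := Finset.card_eq_one.mp hc1
      have hzw : z = w := by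
        rw [hw] at hzb; simpa using hzb
      have hMbz : M b = {z} := by rw [hw, hzw]
      have hA := (hMfact b hb).2.2.2
      have hs2 : f (base.erase b') ⊆ f base \ M b := by
        apply Finset.subset_sdiff.mpr
        refine ⟨(hMfact b' hb').1, ?_⟩
        rw [hMbz, Finset.disjoint_singleton_right]
        intro hzin
        rw [hMdef] at hzb'
        exact (Finset.mem_sdiff.mp hzb').2 hzin
      rw [hA] at hs2
      have h4 := (hf.2.1 _ _ ((Finset.erase_subset _ _).trans hbsub)
        ((Finset.erase_subset _ _).trans hbsub)).mpr hs2
      have h5 : b ∈ base.erase b' := Finset.mem_erase.mpr ⟨hne, hb⟩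
      exact (Finset.mem_erase.mp (h4 h5)).1 rfl
    have hU2 : ∀ b ∈ base, ∀ b' ∈ base, b ≠ b' → (M b).card = 2 → (M b').card = 2 →
        (M b ∩ M b').Nonempty := by
      intro b hb b' hb' hne h2b h2b'
      by_contra hemp
      rw [Finset.not_nonempty_iff_eq_empty] at hemp
      have hfsub := (hMfact b hb).1
      have hfsub' := (hMfact b' hb').1
      have hAB : f (base.erase b) ∪ f (base.erase b') = f base := by
        apply Finset.Subset.antisymm (Finset.union_subset hfsub hfsub')
        intro z hz
        by_contra hz2
        rw [Finset.mem_union] at hz2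
        push_neg at hz2
        have hzm : z ∈ M b ∩ M b' := Finset.mem_inter.mpr
          ⟨by rw [hMdef]; exact Finset.mem_sdiff.mpr ⟨hz, hz2.1⟩,
           by rw [hMdef]; exact Finset.mem_sdiff.mpr ⟨hz, hz2.2⟩⟩
        rw [hemp] at hzm
        exact Finset.notMem_empty z hzm
      have hb'e : b' ∈ base.erase b := Finset.mem_erase.mpr ⟨fun h => hne h.symm, hb'⟩
      have hWsub1 : (base.erase b).erase b' ⊆ base.erase b := Finset.erase_subset _ _
      have hWsub2 : (base.erase b).erase b' ⊆ base.erase b' := by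
        intro z hz
        have h1 := Finset.mem_erase.mp hz
        have h2 := Finset.mem_erase.mp h1.2
        exact Finset.mem_erase.mpr ⟨h1.1, h2.2⟩
      have hWbase : (base.erase b).erase b' ⊆ base := hWsub1.trans (Finset.erase_subset _ _)
      have hfW : f ((base.erase b).erase b') ⊆ f (base.erase b) ∩ f (base.erase b') :=
        Finset.subset_inter
          (embed_mono hf (hWbase.trans hbsub) ((Finset.erase_subset _ _).trans hbsub) hWsub1)
          (embed_mono hf (hWbase.trans hbsub) ((Finset.erase_subset _ _).trans hbsub) hWsub2)
      have hWcard : ((base.erase b).erase b').card = base.card - 1 - 1 := by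
        rw [Finset.card_erase_of_mem hb'e, Finset.card_erase_of_mem hb]
      have hWlow := hlow _ hWbase
      have huic := Finset.card_union_add_card_inter (f (base.erase b)) (f (base.erase b'))
      rw [hAB] at huic
      have hfWc := Finset.card_le_card hfW
      have hMcb : (M b).card = (f base).card - (f (base.erase b)).card := by
        rw [hMdef]; exact Finset.card_sdiff_of_subset hfsub
      have hMcb' : (M b').card = (f base).card - (f (base.erase b')).card := by
        rw [hMdef]; exact Finset.card_sdiff_of_subset hfsub'
      have hle1 := Finset.card_le_card hfsub
      have hle2 := Finset.card_le_card hfsub'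
      omega
    set Mf : {b // b ∈ base} → Finset ℕ := fun b => M b.1 with hMf
    have hall : ∀ s : Finset {b // b ∈ base}, s.card ≤ (s.biUnion Mf).card := by
      intro s
      set s₁ := s.filter (fun b => (Mf b).card = 1) with hs₁
      set s₂ := s.filter (fun b => ¬ (Mf b).card = 1) with hs₂
      have hcard1 : ∀ b ∈ s₁, (Mf b).card = 1 := by
        intro b hb
        rw [hs₁] at hb
        exact (Finset.mem_filter.mp hb).2
      have hcard2 : ∀ b ∈ s₂, (Mf b).card = 2 := by
        intro b hb
        rw [hs₂] at hb
        have h1 := (hMfact b.1 b.2).2.1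
        have h2 := (hMfact b.1 b.2).2.2.1
        have h3 := (Finset.mem_filter.mp hb).2
        simp only [hMf] at h3 ⊢
        omega
      have hdisj : Disjoint (s₁.biUnion Mf) (s₂.biUnion Mf) := by
        rw [Finset.disjoint_left]
        intro z hz1 hz2
        obtain ⟨b, hb, hzb⟩ := Finset.mem_biUnion.mp hz1
        obtain ⟨b', hb', hzb'⟩ := Finset.mem_biUnion.mp hz2
        have hne : b.1 ≠ b'.1 := by
          intro h
          have t1 := hcard1 b hb
          have t2 := hcard2 b' hb'
          simp only [hMf] at t1 t2
          rw [h] at t1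
          omega
        simp only [hMf] at hzb hzb'
        exact hU1 b.1 b.2 b'.1 b'.2 hne (by simpa [hMf] using hcard1 b hb) z hzb hzb'
      have hpairdisj : ∀ b ∈ s₁, ∀ b' ∈ s₁, b ≠ b' → Disjoint (Mf b) (Mf b') := by
        intro b hb b' hb' hbb
        rw [Finset.disjoint_left]
        intro z hzb hzb'
        have hne : b.1 ≠ b'.1 := fun h => hbb (Subtype.ext h)
        simp only [hMf] at hzb hzb'
        exact hU1 b.1 b.2 b'.1 b'.2 hne (by simpa [hMf] using hcard1 b hb) z hzb hzb'
      have hbi1 : (s₁.biUnion Mf).card = s₁.card := by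
        rw [Finset.card_biUnion hpairdisj,
          Finset.sum_congr rfl (fun b hb => hcard1 b hb)]
        simp
      have hbi2 : s₂.card ≤ (s₂.biUnion Mf).card := by
        have hinj : Set.InjOn Mf s₂ := by
          intro b hb b' hb' h
          simp only [hMf] at h
          exact Subtype.ext (hU3 b.1 b.2 b'.1 b'.2 h)
        have hci : (s₂.image Mf).card = s₂.card := Finset.card_image_of_injOn hinj
        have hbu : s₂.biUnion Mf = (s₂.image Mf).biUnion id := by
          ext z
          simp only [Finset.mem_biUnion, Finset.mem_image, id]
          constructor
          · rintro ⟨b, hb, hz⟩; exact ⟨Mf b, ⟨b, hb, rfl⟩, hz⟩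
          · rintro ⟨A, ⟨b, hb, rfl⟩, hz⟩; exact ⟨b, hb, hz⟩
        rw [hbu, ← hci]
        apply inter_family
        · rintro A hA
          obtain ⟨b, hb, rfl⟩ := Finset.mem_image.mp hA
          exact hcard2 b hb
        · rintro A hA B hB hABne
          obtain ⟨b, hb, rfl⟩ := Finset.mem_image.mp hA
          obtain ⟨b', hb', rfl⟩ := Finset.mem_image.mp hB
          have hne : b.1 ≠ b'.1 := by
            intro h
            apply hABne
            simp only [hMf]
            exact congrArg M h
          have r := hU2 b.1 b.2 b'.1 b'.2 hne
            (by simpa [hMf] using hcard2 b hb) (by simpa [hMf] using hcard2 b' hb')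
          simpa [hMf] using r
      have hsum : s₁.card + s₂.card = s.card := by
        rw [hs₁, hs₂]
        exact Finset.card_filter_add_card_filter_not (fun b => (Mf b).card = 1)
      have hbiu : (s₁.biUnion Mf) ∪ (s₂.biUnion Mf) = s.biUnion Mf := by
        ext z
        simp only [Finset.mem_union, Finset.mem_biUnion, hs₁, hs₂, Finset.mem_filter]
        constructor
        · rintro (⟨b, ⟨hb, _⟩, hz⟩ | ⟨b, ⟨hb, _⟩, hz⟩) <;> exact ⟨b, hb, hz⟩
        · rintro ⟨b, hb, hz⟩
          by_cases h : (Mf b).card = 1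
          · exact Or.inl ⟨b, ⟨hb, h⟩, hz⟩
          · exact Or.inr ⟨b, ⟨hb, h⟩, hz⟩
      have hcu := Finset.card_union_of_disjoint hdisj
      rw [hbiu] at hcu
      omega
    obtain ⟨π, hπinj, hπmem⟩ := (Finset.all_card_le_biUnion_card_iff_exists_injective Mf).mp hall
    set π' : ℕ → ℕ := fun b => if h : b ∈ base then π ⟨b, h⟩ else 0 with hπ'def
    have hπ'mem : ∀ b, b ∈ base → π' b ∈ M b := by
      intro b hb
      simp only [hπ'def, dif_pos hb]
      have := hπmem ⟨b, hb⟩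
      simpa [hMf] using this
    have hπ'inj : ∀ b ∈ base, ∀ b' ∈ base, π' b = π' b' → b = b' := by
      intro b hb b' hb' h
      simp only [hπ'def, dif_pos hb, dif_pos hb'] at h
      have := hπinj h
      exact congrArg Subtype.val this
    set Pimg := base.image π' with hPimg
    have hPcard : Pimg.card = base.card := by
      rw [hPimg]
      exact Finset.card_image_of_injOn (fun b hb b' hb' h => hπ'inj b hb b' hb' h)
    have hPsub : Pimg ⊆ f base := by
      intro z hz
      rw [hPimg] at hz
      obtain ⟨b, hb, rfl⟩ := Finset.mem_image.mp hz
      have hm := hπ'mem b hb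
      rw [hMdef] at hm
      exact (Finset.mem_sdiff.mp hm).1
    have hgap : (f base \ Pimg).card ≤ 1 := by
      rw [Finset.card_sdiff_of_subset hPsub]
      omega
    set cfn : ℕ → ℕ := fun j => if 2*j-1 ∈ Pimg then 2*j-1 else 2*j with hcfn
    have hcf_pair : ∀ j, cfn j = 2*j-1 ∨ cfn j = 2*j := by
      intro j
      simp only [hcfn]
      by_cases h : 2*j-1 ∈ Pimg
      · left; rw [if_pos h]
      · right; rw [if_neg h]
    have hcf_mem : ∀ j ∈ pairIndices n (f base), cfn j ∈ Pimg := by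
      intro j hj
      have hjm := Finset.mem_filter.mp hj
      have hj1 := Finset.mem_Icc.mp hjm.1
      simp only [hcfn]
      by_cases h : 2*j-1 ∈ Pimg
      · rw [if_pos h]; exact h
      · rw [if_neg h]
        by_contra h2
        have hsub : ({2*j-1, 2*j} : Finset ℕ) ⊆ f base \ Pimg := by
          intro z hz
          simp only [Finset.mem_insert, Finset.mem_singleton] at hz
          rcases hz with rfl | rfl
          · exact Finset.mem_sdiff.mpr ⟨hjm.2.1, h⟩
          · exact Finset.mem_sdiff.mpr ⟨hjm.2.2, h2⟩
        have hc2 : ({2*j-1, 2*j} : Finset ℕ).card = 2 := by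
          rw [Finset.card_insert_of_notMem (by simp; omega), Finset.card_singleton]
        have := Finset.card_le_card hsub
        omega
    set badB := base.filter (fun b => π' b ∈ (pairIndices n (f base)).image cfn) with hbadB
    have hbadB_sub : badB ⊆ base := by rw [hbadB]; exact Finset.filter_subset _ _
    have hbadB_le : badB.card ≤ (pairIndices n (f base)).card := by
      have h1 : badB.card ≤ ((pairIndices n (f base)).image cfn).card := by
        apply Finset.card_le_card_of_injOn π'
        · intro b hb
          rw [hbadB] at hb
          exact (Finset.mem_filter.mp hb).2
        · intro b hb b' hb' h
          exact hπ'inj b (hbadB_sub hb) b' (hbadB_sub hb') h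
      exact h1.trans Finset.card_image_le
    have hbadB_pos : 1 ≤ badB.card := by
      obtain ⟨j, hj⟩ := Finset.nonempty_of_ne_empty hq0
      obtain ⟨b, hb, hbe⟩ := Finset.mem_image.mp (hcf_mem j hj)
      refine Finset.card_pos.mpr ⟨b, ?_⟩
      rw [hbadB]
      refine Finset.mem_filter.mpr ⟨hb, ?_⟩
      rw [hbe]
      exact Finset.mem_image_of_mem cfn hj
    set S := base \ badB with hS
    have hSb : S ⊆ base := by rw [hS]; exact Finset.sdiff_subset
    have hSg : S ⊆ ground n := hSb.trans hbsub
    have hScard : S.card = base.card - badB.card := by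
      rw [hS]; exact Finset.card_sdiff_of_subset hbadB_sub
    have hdiffc : (base \ S).card = badB.card := by
      have heq : base \ S = badB := by
        rw [hS]
        exact Finset.sdiff_sdiff_eq_self hbadB_sub
      rw [heq]
    have hflow := hlow S hSb
    have hfub := hub S hSb
    rw [hdiffc] at hfub
    obtain ⟨j, hjI, hj1, hj2⟩ := hPE (f S) (himg S hSg) (by omega) (by omega)
    have hfSC : f S ⊆ f base := hfsubC S hSb
    have hjC : j ∈ pairIndices n (f base) :=
      Finset.mem_filter.mpr ⟨hjI, hfSC hj1, hfSC hj2⟩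
    obtain ⟨b, hb, hbe⟩ := Finset.mem_image.mp (hcf_mem j hjC)
    have hbbad : b ∈ badB := by
      rw [hbadB]
      refine Finset.mem_filter.mpr ⟨hb, ?_⟩
      rw [hbe]
      exact Finset.mem_image_of_mem cfn hjC
    have hSe : S ⊆ base.erase b := by
      intro z hz
      rw [hS] at hz
      have hzm := Finset.mem_sdiff.mp hz
      exact Finset.mem_erase.mpr ⟨fun h => hzm.2 (h ▸ hbbad), hzm.1⟩
    have hmono := embed_mono hf hSg ((Finset.erase_subset _ _).trans hbsub) hSe
    have hnotin : π' b ∉ f (base.erase b) := by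
      have hm := hπ'mem b hb
      rw [hMdef] at hm
      exact (Finset.mem_sdiff.mp hm).2
    have hin : π' b ∈ f S := by
      rw [hbe]
      rcases hcf_pair j with h | h
      · rw [h]; exact hj1
      · rw [h]; exact hj2
    exact hnotin (hmono hin)
end

section
/- For every n ≥ 1, the coloring of 2^[2n−1] that colors a set red if its cardinality is odd and blue if its cardinality is even admits no monochromatic copy of Q_n; consequently R(Q_n, Q_n) ≥ 2n. -/
open Finset BigOperators

lemma no_mono_parity (n : ℕ) (hn : 1 ≤ n) (Q : Finset (Finset ℕ))
    (hQc : IsCopy n (2*n - 1) Q) (par : Prop)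
    (hp : ∀ S ∈ Q, (Odd S.card ↔ par)) : False := by
  obtain ⟨f, ⟨hsub, hiff, hinj⟩, hQ⟩ := hQc
  have hmem : ∀ S, S ⊆ ground n → f S ∈ Q := by
    intro S hS
    rw [hQ]
    exact Finset.mem_image_of_mem f (Finset.mem_powerset.mpr hS)
  have hground : ∀ i, i ≤ n → Finset.Icc 1 i ⊆ ground n := by
    intro i hi
    exact Finset.Icc_subset_Icc le_rfl hi
  have key : ∀ i, i ≤ n → 2 * i ≤ (f (Finset.Icc 1 i)).card := by
    intro i
    induction i with
    | zero => intro _; omega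
    | succ i ih =>
      intro hi
      have hi' : i ≤ n := by omega
      have h1 := hground i hi'
      have h2 := hground (i+1) hi
      have hss : Finset.Icc 1 i ⊆ Finset.Icc 1 (i+1) :=
        Finset.Icc_subset_Icc le_rfl (by omega)
      have hfss : f (Finset.Icc 1 i) ⊆ f (Finset.Icc 1 (i+1)) :=
        (hiff _ _ h1 h2).mp hss
      have hne : f (Finset.Icc 1 i) ≠ f (Finset.Icc 1 (i+1)) := by
        intro h
        have heq := hinj _ _ h1 h2 h
        have hmem1 : (i+1 : ℕ) ∈ Finset.Icc 1 i := by
          rw [heq]; simp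
        simp at hmem1
      have hlt : (f (Finset.Icc 1 i)).card < (f (Finset.Icc 1 (i+1))).card :=
        Finset.card_lt_card (lt_of_le_of_ne hfss hne)
      have hpa := hp _ (hmem _ h1)
      have hpb := hp _ (hmem _ h2)
      have hpar : Odd (f (Finset.Icc 1 i)).card ↔ Odd (f (Finset.Icc 1 (i+1))).card :=
        hpa.trans hpb.symm
      rw [Nat.odd_iff, Nat.odd_iff] at hpar
      have := ih hi'
      have h2le : (f (Finset.Icc 1 i)).card + 2 ≤ (f (Finset.Icc 1 (i+1))).card := by
        rcases Nat.eq_or_lt_of_le hlt with h | h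
        · omega
        · omega
      omega
  have hn2 := key n le_rfl
  have hcard : (f (Finset.Icc 1 n)).card ≤ 2*n - 1 := by
    have := Finset.card_le_card (hsub _ (hground n le_rfl))
    simpa [ground, Nat.card_Icc] using this
  omega

/-- For every `n ≥ 1`, the parity coloring of `2^[2n-1]`
(red iff odd cardinality) admits no monochromatic copy of `Q_n`; consequently
there is a 2-coloring of `2^[2n-1]` with no monochromatic copy of `Q_n`,
i.e. `R(Q_n, Q_n) ≥ 2n`. -/
theorem statement10 (n : ℕ) (hn : 1 ≤ n) :
    (∀ Q : Finset (Finset ℕ), IsCopy n (2*n - 1) Q →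
      (¬ ∀ S ∈ Q, Odd S.card) ∧ (¬ ∀ S ∈ Q, ¬ Odd S.card)) ∧
    ∃ c : Finset ℕ → Bool,
      ∀ Q : Finset (Finset ℕ), IsCopy n (2*n - 1) Q →
        (¬ ∀ S ∈ Q, c S = true) ∧ (¬ ∀ S ∈ Q, c S = false) := by
  constructor
  · intro Q hQc
    constructor
    · intro hall
      exact no_mono_parity n hn Q hQc True (fun S hS => ⟨fun _ => trivial, fun _ => hall S hS⟩)
    · intro hall
      exact no_mono_parity n hn Q hQc False
        (fun S hS => ⟨fun h => hall S hS h, fun h => h.elim⟩)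
  · refine ⟨fun S => decide (Odd S.card), fun Q hQc => ⟨?_, ?_⟩⟩
    · intro hall
      exact no_mono_parity n hn Q hQc True
        (fun S hS => ⟨fun _ => trivial, fun _ => by simpa using hall S hS⟩)
    · intro hall
      refine no_mono_parity n hn Q hQc False (fun S hS => ⟨fun h => ?_, fun h => h.elim⟩)
      have := hall S hS
      simp at this
      exact (Nat.not_odd_iff_even.mpr this) h
end

section
/- The collection R of subsets of [2n] colored red by the coloring c₀ is restrictive; that is, R is pair-enforcing, miss-forbidding, not-too-high and flip-susceptible. -/
open Finset BigOperators

/-- The coloring `c₀`: `S` is red according to the five-case rule. -/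
def isRed (n : ℕ) (S : Finset ℕ) : Prop :=
  if S.card < (n + 1) / 2 then True
  else if S.card < n then HasPair n S
  else if S.card = n then Odd (∑ x ∈ S, x)
  else if S.card ≤ n + n / 2 then ¬ MissesPair n S
  else False

lemma transversal_injOn {n : ℕ} {S : Finset ℕ} (hS : S ⊆ ground (2*n))
    (hnp : ¬ HasPair n S) :
    ∀ x ∈ S, ∀ y ∈ S, (x + 1) / 2 = (y + 1) / 2 → x = y := by
  intro x hx y hy hxy
  by_contra hne
  have hx' := hS hx
  have hy' := hS hy
  simp only [ground, Finset.mem_Icc] at hx' hy'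
  set k := (x + 1) / 2 with hk
  have hcase : (x = 2*k - 1 ∧ y = 2*k) ∨ (y = 2*k - 1 ∧ x = 2*k) := by omega
  apply hnp
  refine ⟨k, by simp only [Finset.mem_Icc]; omega, ?_⟩
  rcases hcase with ⟨h1, h2⟩ | ⟨h1, h2⟩
  · exact ⟨h1 ▸ hx, h2 ▸ hy⟩
  · exact ⟨h1 ▸ hy, h2 ▸ hx⟩

lemma transversal_surj {n : ℕ} {S : Finset ℕ} (hS : S ⊆ ground (2*n))
    (hcard : S.card = n) (hnp : ¬ HasPair n S) :
    ∀ k ∈ Finset.Icc 1 n, ∃ x ∈ S, (x + 1) / 2 = k := by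
  have himg : S.image (fun x => (x + 1) / 2) = Finset.Icc 1 n := by
    apply Finset.eq_of_subset_of_card_le
    · intro k hk
      simp only [Finset.mem_image] at hk
      obtain ⟨x, hx, rfl⟩ := hk
      have := hS hx
      simp only [ground, Finset.mem_Icc] at this ⊢
      omega
    · rw [Finset.card_image_of_injOn (fun x hx y hy h => transversal_injOn hS hnp x hx y hy h),
        hcard, Nat.card_Icc]
      omega
  intro k hk
  rw [← himg] at hk
  simpa using hk

/-- The collection of subsets of `[2n]` colored red by `c₀`
is restrictive. -/
theorem statement11 (n : ℕ) :
    Restrictive n {S : Finset ℕ | S ⊆ ground (2*n) ∧ isRed n S} := by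
  constructor
  · -- PairEnforcing
    intro S hS hlo hhi
    obtain ⟨-, hred⟩ := hS
    unfold isRed at hred
    split_ifs at hred with h1 h2 h3 h4 <;> first | exact hred | omega
  refine ⟨?_, ?_, ?_⟩
  · -- MissForbidding
    intro S hS hlo hhi
    obtain ⟨-, hred⟩ := hS
    unfold isRed at hred
    split_ifs at hred with h1 h2 h3 h4 <;> first | exact hred | omega
  · -- NotTooHigh
    intro S hS
    obtain ⟨-, hred⟩ := hS
    by_contra hc
    unfold isRed at hred
    split_ifs at hred with h1 h2 h3 h4 <;> first | exact hred | omega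
  · -- FlipSusceptible
    intro S1 S2 h1g h2g h1c h2c huc hnp1 hnp2 hmem
    obtain ⟨⟨-, hr1⟩, -, hr2⟩ := hmem
    have hodd1 : Odd (∑ x ∈ S1, x) := by
      unfold isRed at hr1
      split_ifs at hr1 with h1 h2 h3 <;> first | exact hr1 | omega
    have hodd2 : Odd (∑ x ∈ S2, x) := by
      unfold isRed at hr2
      split_ifs at hr2 with h1 h2 h3 <;> first | exact hr2 | omega
    have hint : (S1 ∩ S2).card = n - 1 ∧ 1 ≤ n := by
      have := Finset.card_inter_add_card_union S1 S2
      omega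
    have hd1 : (S1 \ S2).card = 1 := by
      have := Finset.card_inter_add_card_sdiff S1 S2
      omega
    have hd2 : (S2 \ S1).card = 1 := by
      have := Finset.card_inter_add_card_sdiff S2 S1
      rw [Finset.inter_comm] at this
      omega
    obtain ⟨a, ha⟩ := Finset.card_eq_one.mp hd1
    obtain ⟨b, hb⟩ := Finset.card_eq_one.mp hd2
    have haS1 : a ∈ S1 ∧ a ∉ S2 := by
      have : a ∈ S1 \ S2 := ha ▸ Finset.mem_singleton_self a
      exact ⟨(Finset.mem_sdiff.mp this).1, (Finset.mem_sdiff.mp this).2⟩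
    have hbS2 : b ∈ S2 ∧ b ∉ S1 := by
      have : b ∈ S2 \ S1 := hb ▸ Finset.mem_singleton_self b
      exact ⟨(Finset.mem_sdiff.mp this).1, (Finset.mem_sdiff.mp this).2⟩
    -- b is the partner of a
    have hka : (a + 1) / 2 ∈ Finset.Icc 1 n := by
      have := h1g haS1.1
      simp only [ground, Finset.mem_Icc] at this ⊢
      omega
    obtain ⟨b', hb'S2, hb'k⟩ := transversal_surj h2g h2c hnp2 _ hka
    have hb'b : b' = b := by
      by_contra hne
      have hb'S1 : b' ∈ S1 := by
        have : b' ∈ S2 \ S1 ∨ b' ∈ S1 := by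
          by_cases h : b' ∈ S1
          · exact Or.inr h
          · exact Or.inl (Finset.mem_sdiff.mpr ⟨hb'S2, h⟩)
        rcases this with h | h
        · exact absurd (Finset.mem_singleton.mp (hb ▸ h)) hne
        · exact h
      have := transversal_injOn h1g hnp1 b' hb'S1 a haS1.1 hb'k
      rw [this] at hb'S2
      exact haS1.2 hb'S2
    rw [hb'b] at hb'k
    -- sums
    have hs1 : ∑ x ∈ S1 ∩ S2, x + ∑ x ∈ S1 \ S2, x = ∑ x ∈ S1, x :=
      Finset.sum_inter_add_sum_sdiff S1 S2 _
    have hs2 : ∑ x ∈ S1 ∩ S2, x + ∑ x ∈ S2 \ S1, x = ∑ x ∈ S2, x := by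
      rw [Finset.inter_comm]
      exact Finset.sum_inter_add_sum_sdiff S2 S1 _
    rw [ha, Finset.sum_singleton] at hs1
    rw [hb, Finset.sum_singleton] at hs2
    have hab : a ≠ b := fun h => haS1.2 (h ▸ hbS2.1)
    have hag := h1g haS1.1
    have hbg := h2g hbS2.1
    simp only [ground, Finset.mem_Icc] at hag hbg
    rw [Nat.odd_iff] at hodd1 hodd2
    omega
end
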